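/- arXiv:2512.19618 — 2 statements merged into one kernel-verified Lean document; each statement's English description precedes it below -/
import Mathlib

section
/- Let n ≥ 1, let p ∈ ℝⁿ and R > 0, and let ρ : ℝⁿ → ℝ be a differentiable function with ρ(x) = 1 for all x in the closed ball closedBall(p, R). For each natural number m define φ_m : ℝⁿ → ℝ by φ_m(x) = ρ(x)·sin(m·x₁). Then the sequence (1/m²)·∫_{ball(p,R)} (∂₁φ_m(x))² dx converges to (1/2)·Vol(ball(p, R)) as m → ∞, where ∂₁ denotes the partial derivative in the first coordinate direction and Vol denotes Lebesgue measure. -/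
open MeasureTheory Filter Topology

/-- For `ρ ≡ 1` on `closedBall p R` and `φ_m(x) = ρ(x) sin(m x₁)`, the rescaled
integrals `(1/m²) ∫_{ball p R} (∂₁ φ_m)² dx` converge to `½ Vol(ball p R)`. -/
theorem deriv_sq_growth (n : ℕ) (hn : 1 ≤ n)
    (p : EuclideanSpace ℝ (Fin n)) (R : ℝ) (hR : 0 < R)
    (ρ : EuclideanSpace ℝ (Fin n) → ℝ) (hρ : Differentiable ℝ ρ)
    (hρ1 : ∀ x ∈ Metric.closedBall p R, ρ x = 1)
    (φ : ℕ → EuclideanSpace ℝ (Fin n) → ℝ)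
    (hφ : ∀ m x, φ m x = ρ x * Real.sin (m * x ⟨0, hn⟩)) :
    Tendsto
      (fun m : ℕ => (1 / (m : ℝ) ^ 2) *
        ∫ x in Metric.ball p R,
          (fderiv ℝ (φ m) x (EuclideanSpace.single ⟨0, hn⟩ 1)) ^ 2)
      atTop
      (nhds ((1 / 2) * (volume (Metric.ball p R)).toReal)) := by
  set i0 : Fin n := ⟨0, hn⟩ with hi0
  set L : EuclideanSpace ℝ (Fin n) →L[ℝ] ℝ := EuclideanSpace.proj i0 with hLdef
  have hLapp : ∀ y : EuclideanSpace ℝ (Fin n), L y = y i0 := fun y => rfl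
  set S := Metric.ball p R with hS
  have hSmeas : MeasurableSet S := measurableSet_ball
  have hSfin : volume S < ⊤ := measure_ball_lt_top
  -- integrability of bounded continuous functions on S
  have hconst : IntegrableOn (fun _ : EuclideanSpace ℝ (Fin n) => (1:ℝ)) S volume :=
    integrableOn_const hSfin.ne
  have hIntCos : ∀ c : ℝ, IntegrableOn (fun x : EuclideanSpace ℝ (Fin n) =>
      Real.cos (c * x i0)) S volume := by
    intro c
    refine hconst.mono' ?_ ?_
    · exact (Real.continuous_cos.comp (continuous_const.mul L.continuous)).aestronglyMeasurable
    · exact Filter.Eventually.of_forall fun x => by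
        simpa using Real.abs_cos_le_one (c * x i0)
  -- Riemann-Lebesgue : ∫_S cos (2 m x₁) → 0
  have hRL : Tendsto (fun m : ℕ => ∫ x in S, Real.cos (2 * m * x i0)) atTop (𝓝 0) := by
    set f : EuclideanSpace ℝ (Fin n) → ℂ := S.indicator (fun _ => 1) with hf
    have hT := tendsto_integral_exp_inner_smul_cocompact (V := EuclideanSpace ℝ (Fin n)) f
    set w : ℕ → EuclideanSpace ℝ (Fin n) := fun m =>
      EuclideanSpace.single i0 (-(m : ℝ) / Real.pi) with hw
    have hwten : Tendsto w atTop (cocompact (EuclideanSpace ℝ (Fin n))) := by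
      rw [← Metric.cobounded_eq_cocompact, ← tendsto_norm_atTop_iff_cobounded]
      have : ∀ m : ℕ, ‖w m‖ = (m : ℝ) / Real.pi := by
        intro m
        rw [hw]
        simp only [EuclideanSpace.norm_single, Real.norm_eq_abs]
        rw [abs_div, abs_neg, abs_of_nonneg (Nat.cast_nonneg m),
          abs_of_pos Real.pi_pos]
      rw [tendsto_congr this]
      exact tendsto_natCast_atTop_atTop.atTop_div_const Real.pi_pos
    have hcomp := hT.comp hwten
    have hre := (Complex.continuous_re.tendsto 0).comp hcomp
    simp only [Complex.zero_re] at hre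
    refine hre.congr fun m => ?_
    -- compute the real part of the Fourier integral
    have hinner : ∀ v : EuclideanSpace ℝ (Fin n),
        (inner ℝ v (w m) : ℝ) = (-(m : ℝ) / Real.pi) * v i0 := by
      intro v
      rw [hw]
      simpa using EuclideanSpace.inner_single_right (𝕜 := ℝ) i0 (-(m : ℝ) / Real.pi) v
    have h1 : (fun v : EuclideanSpace ℝ (Fin n) => Real.fourierChar (-(inner ℝ v (w m) : ℝ)) • f v)
        = S.indicator (fun v => Complex.exp ((2 * Real.pi * ((m : ℝ) / Real.pi * v i0) : ℝ) * Complex.I)) := by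
      funext v
      rw [hf]
      by_cases hv : v ∈ S
      · simp only [Set.indicator_of_mem hv, Circle.smul_def, Real.fourierChar_apply, smul_eq_mul,
          mul_one, hinner v]
        ring_nf
      · simp [Set.indicator_of_notMem hv]
    have hπ : Real.pi ≠ 0 := Real.pi_ne_zero
    have h2 : ∀ v : EuclideanSpace ℝ (Fin n),
        (2 * Real.pi * ((m : ℝ) / Real.pi * v i0)) = 2 * m * v i0 := by
      intro v; field_simp
    have hintC : IntegrableOn
        (fun v : EuclideanSpace ℝ (Fin n) =>
          Complex.exp ((2 * Real.pi * ((m : ℝ) / Real.pi * v i0) : ℝ) * Complex.I)) S volume := by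
      refine hconst.mono' ?_ ?_
      · refine Continuous.aestronglyMeasurable ?_
        exact Complex.continuous_exp.comp
          ((Complex.continuous_ofReal.comp
            (continuous_const.mul (continuous_const.mul L.continuous))).mul continuous_const)
      · exact Filter.Eventually.of_forall fun v => by
          rw [Complex.norm_exp_ofReal_mul_I]
    calc ((∫ v, Real.fourierChar (-(inner ℝ v (w m) : ℝ)) • f v)).re
        = (∫ v in S, Complex.exp ((2 * Real.pi * ((m : ℝ) / Real.pi * v i0) : ℝ) * Complex.I)).re := by
          rw [h1, integral_indicator hSmeas]
      _ = ∫ v in S, (Complex.exp ((2 * Real.pi * ((m : ℝ) / Real.pi * v i0) : ℝ) * Complex.I)).re := by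
          simp only [← RCLike.re_to_complex]
          rw [← integral_re hintC]
      _ = ∫ v in S, Real.cos (2 * m * v i0) := by
          refine setIntegral_congr_fun hSmeas fun v _ => ?_
          rw [Complex.exp_ofReal_mul_I_re, h2 v]
  -- pointwise derivative computation on the ball
  have hderiv : ∀ m : ℕ, ∀ x ∈ S,
      fderiv ℝ (φ m) x (EuclideanSpace.single i0 1) = (m : ℝ) * Real.cos (m * x i0) := by
    intro m x hx
    have hEq : φ m =ᶠ[nhds x] fun y => Real.sin ((m : ℝ) * L y) := by
      filter_upwards [Metric.isOpen_ball.mem_nhds hx] with y hy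
      rw [hφ, hρ1 y (Metric.ball_subset_closedBall hy), one_mul, hLapp]
    have h1 : HasFDerivAt (fun y : EuclideanSpace ℝ (Fin n) => (m : ℝ) * L y)
        ((m : ℝ) • L) x := L.hasFDerivAt.const_mul (m : ℝ)
    have h2 := (Real.hasDerivAt_sin ((m : ℝ) * L x)).comp_hasFDerivAt x h1
    have h3 : fderiv ℝ (φ m) x = Real.cos ((m : ℝ) * L x) • ((m : ℝ) • L) := by
      rw [hEq.fderiv_eq]
      exact h2.fderiv
    rw [h3]
    simp only [ContinuousLinearMap.coe_smul', Pi.smul_apply, smul_eq_mul]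
    have : L (EuclideanSpace.single i0 1) = 1 := by
      rw [hLapp, EuclideanSpace.single_apply, if_pos rfl]
    rw [this, hLapp]
    ring
  -- the sequence eventually equals ½ vol + ½ ∫ cos(2 m x₁)
  have hEvEq : ∀ᶠ m : ℕ in atTop,
      (1 / (m : ℝ) ^ 2) * ∫ x in S, (fderiv ℝ (φ m) x (EuclideanSpace.single i0 1)) ^ 2
      = (1 / 2) * (volume S).toReal + (1 / 2) * ∫ x in S, Real.cos (2 * m * x i0) := by
    filter_upwards [eventually_ge_atTop 1] with m hm
    have hm0 : (m : ℝ) ≠ 0 := Nat.cast_ne_zero.mpr (by omega)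
    have hstep1 : ∫ x in S, (fderiv ℝ (φ m) x (EuclideanSpace.single i0 1)) ^ 2
        = ∫ x in S, (m : ℝ) ^ 2 * (1 / 2 + Real.cos (2 * m * x i0) / 2) := by
      refine setIntegral_congr_fun hSmeas fun x hx => ?_
      rw [hderiv m x hx, mul_pow, Real.cos_sq,
        show (2:ℝ) * ((m:ℝ) * x i0) = 2 * m * x i0 from by ring]
    have hI1 : IntegrableOn (fun _ : EuclideanSpace ℝ (Fin n) => (1:ℝ)/2) S volume :=
      integrableOn_const hSfin.ne
    have hI2 : IntegrableOn (fun x : EuclideanSpace ℝ (Fin n) =>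
        Real.cos (2 * m * x i0) / 2) S volume := by
      simpa [div_eq_mul_inv, IntegrableOn] using (hIntCos (2 * m)).mul_const (2:ℝ)⁻¹
    rw [hstep1, integral_const_mul, ← mul_assoc, one_div,
      inv_mul_cancel₀ (pow_ne_zero 2 hm0), one_mul,
      integral_add hI1 hI2, setIntegral_const, smul_eq_mul, integral_div]
    rw [measureReal_def]
    ring
  refine Tendsto.congr' (EventuallyEq.symm hEvEq) ?_
  have := (tendsto_const_nhds (x := (1 / 2) * (volume S).toReal) (f := atTop (α := ℕ))).add
    (hRL.const_mul (1/2 : ℝ))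
  simpa using this
end

section
/- Let n ≥ 2 and let Ω ⊆ ℝⁿ be open and bounded. Let p ∈ ℝⁿ and R > 0 with closedBall(p, R) ⊆ Ω, and let ρ : ℝⁿ → ℝ be a smooth function with compact support contained in Ω such that ρ(x) = 1 for all x ∈ closedBall(p, R). Let μ, α, G : ℝⁿ → ℝ be measurable functions and let μ₀, μ₁, α₁, L, ε be positive real numbers such that on Ω: 0 < μ₀ ≤ μ(x) ≤ μ₁, 1 ≤ α(x) ≤ α₁, |G(x)| ≤ L, and additionally α(x) ≥ 1 + ε for all x ∈ closedBall(p, R). Let h : ℝ → ℝ be continuous. For each natural number m define φ_m(x) = ρ(x)·sin(m·x₁) and the energy E(m) = ∫_Ω (1/μ(x))·[ (1/2)·G(x)·h(φ_m(x)) + (1 − α(x))·(∂₁φ_m(x))² + Σ_{j=2}^{n} (∂_j φ_m(x))² ] dx. Then E(m) → −∞ as m → ∞ (E tends to −∞ along the filter atTop on ℕ). -/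
open MeasureTheory Filter

private theorem cos_sq_icc (a r : ℝ) (hr : 0 < r) (m : ℕ) (hm : 1 ≤ m) :
    r - 1/m ≤ ∫ t in Set.Icc (a - r) (a + r), Real.cos (m * t) ^ 2 := by
  have hab : a - r ≤ a + r := by linarith
  have hm0 : (0:ℝ) < m := by exact_mod_cast hm
  rw [MeasureTheory.integral_Icc_eq_integral_Ioc, ← intervalIntegral.integral_of_le hab,
    intervalIntegral.integral_comp_mul_left (fun t => Real.cos t ^ 2) (ne_of_gt hm0),
    integral_cos_sq]
  have b1' : |Real.cos (m * (a+r)) * Real.sin (m * (a+r))| ≤ 1 := by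
    rw [abs_mul]
    exact mul_le_one₀ (Real.abs_cos_le_one (m * (a+r))) (abs_nonneg _) (Real.abs_sin_le_one _)
  have b2' : |Real.cos (m * (a-r)) * Real.sin (m * (a-r))| ≤ 1 := by
    rw [abs_mul]
    exact mul_le_one₀ (Real.abs_cos_le_one (m * (a-r))) (abs_nonneg _) (Real.abs_sin_le_one _)
  have b1 := abs_le.mp b1'
  have b2 := abs_le.mp b2'
  rw [smul_eq_mul]
  have expand : (↑m)⁻¹ * ((Real.cos (↑m * (a + r)) * Real.sin (↑m * (a + r)) -
      Real.cos (↑m * (a - r)) * Real.sin (↑m * (a - r)) + ↑m * (a + r) - ↑m * (a - r)) / 2)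
      = r + (↑m)⁻¹ * ((Real.cos (↑m * (a + r)) * Real.sin (↑m * (a + r)) -
      Real.cos (↑m * (a - r)) * Real.sin (↑m * (a - r))) / 2) := by
    field_simp; ring
  rw [expand]
  have hstep : (↑m)⁻¹ * (-1 : ℝ) ≤ (↑m)⁻¹ * ((Real.cos (↑m * (a + r)) * Real.sin (↑m * (a + r)) -
      Real.cos (↑m * (a - r)) * Real.sin (↑m * (a - r))) / 2) :=
    mul_le_mul_of_nonneg_left (by linarith [b1.1, b2.2]) (by positivity)
  have : (↑m)⁻¹ * (-1:ℝ) = -(1/m) := by field_simp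
  linarith

private theorem box_cos (n : ℕ) (i0 : Fin n) (p : EuclideanSpace ℝ (Fin n)) (r : ℝ) (hr : 0 < r)
    (m : ℕ) :
    ∫ x in {x : EuclideanSpace ℝ (Fin n) | ∀ i, x i ∈ Set.Icc (p i - r) (p i + r)},
      Real.cos (m * x i0) ^ 2
    = (2*r)^(n-1) * ∫ t in Set.Icc (p i0 - r) (p i0 + r), Real.cos (m * t) ^ 2 := by
  set F : Fin n → ℝ → ℝ := fun i => if i = i0 then (fun t => Real.cos (m * t) ^ 2) else 1 with hF
  set s : Set (Fin n → ℝ) := Set.univ.pi (fun i => Set.Icc (p i - r) (p i + r)) with hs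
  have hsm : MeasurableSet s := MeasurableSet.univ_pi (fun i => measurableSet_Icc)
  have e := (EuclideanSpace.volume_preserving_symm_measurableEquiv_toLp (Fin n)).symm
  have hemb := (MeasurableEquiv.toLp 2 (Fin n → ℝ)).symm.symm.measurableEmbedding
  have himg : (MeasurableEquiv.toLp 2 (Fin n → ℝ)).symm.symm '' s
      = {x : EuclideanSpace ℝ (Fin n) | ∀ i, x i ∈ Set.Icc (p i - r) (p i + r)} := by
    ext x
    simp only [Set.mem_image, Set.mem_setOf_eq]
    constructor
    · rintro ⟨y, hy, rfl⟩
      intro i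
      exact hy i trivial
    · intro hx
      exact ⟨(MeasurableEquiv.toLp 2 (Fin n → ℝ)).symm x, fun i _ => hx i, by simp⟩
  rw [← himg, e.setIntegral_image_emb hemb]
  have key : ∫ y in s, Real.cos (m * ((MeasurableEquiv.toLp 2 (Fin n → ℝ)).symm.symm y) i0) ^ 2
      = ∫ y : Fin n → ℝ, ∏ i, ((Set.Icc (p i - r) (p i + r)).indicator (F i)) (y i) := by
    rw [← integral_indicator hsm]
    congr 1
    ext y
    by_cases hy : y ∈ s
    · rw [Set.indicator_of_mem hy]
      have : ∀ i, ((Set.Icc (p i - r) (p i + r)).indicator (F i)) (y i) = F i (y i) :=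
        fun i => Set.indicator_of_mem (hy i trivial) _
      rw [Finset.prod_congr rfl (fun i _ => this i), Finset.prod_eq_single i0
        (fun i _ hi => by simp [hF, hi]) (by simp)]
      simp only [hF, if_pos rfl]
      rfl
    · rw [Set.indicator_of_notMem hy]
      rw [hs, Set.mem_univ_pi] at hy
      push_neg at hy
      obtain ⟨i, hi⟩ := hy
      exact (Finset.prod_eq_zero (Finset.mem_univ i)
        (by rw [Set.indicator_of_notMem hi])).symm
  rw [key, MeasureTheory.integral_fintype_prod_volume_eq_prod
    (f := fun i => ((Set.Icc (p i - r) (p i + r)).indicator (F i)))]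
  have hfac : ∀ i, (∫ t, ((Set.Icc (p i - r) (p i + r)).indicator (F i)) t)
      = ∫ t in Set.Icc (p i - r) (p i + r), F i t := fun i =>
    (integral_indicator measurableSet_Icc)
  rw [Finset.prod_congr rfl (fun i _ => hfac i),
    ← Finset.prod_erase_mul _ _ (Finset.mem_univ i0)]
  have h2 : ∀ i ∈ Finset.univ.erase i0, (∫ t in Set.Icc (p i - r) (p i + r), F i t) = 2*r := by
    intro i hi
    have hii : i ≠ i0 := (Finset.mem_erase.mp hi).1
    simp only [hF, if_neg hii, Pi.one_apply]
    rw [setIntegral_const, measureReal_def, Real.volume_Icc]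
    rw [ENNReal.toReal_ofReal (by linarith), smul_eq_mul, mul_one]
    ring
  rw [Finset.prod_congr rfl h2, Finset.prod_const]
  simp [hF, Finset.card_erase_of_mem]

private theorem phi_hasFDerivAt {n : ℕ} (i0 : Fin n) (ρ : EuclideanSpace ℝ (Fin n) → ℝ)
    (hρ : ContDiff ℝ (⊤ : ℕ∞) ρ) (c : ℝ) (x : EuclideanSpace ℝ (Fin n)) :
    HasFDerivAt (fun x : EuclideanSpace ℝ (Fin n) => ρ x * Real.sin (c * x i0))
      (ρ x • (Real.cos (c * x i0) • (c • (EuclideanSpace.proj i0 : EuclideanSpace ℝ (Fin n) →L[ℝ] ℝ)))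
        + Real.sin (c * x i0) • fderiv ℝ ρ x) x := by
  have hρd : HasFDerivAt ρ (fderiv ℝ ρ x) x :=
    (hρ.differentiable (by simp) x).hasFDerivAt
  have hP : HasFDerivAt (fun y : EuclideanSpace ℝ (Fin n) => c * y i0)
      (c • (EuclideanSpace.proj i0 : EuclideanSpace ℝ (Fin n) →L[ℝ] ℝ)) x :=
    ((EuclideanSpace.proj i0 : EuclideanSpace ℝ (Fin n) →L[ℝ] ℝ).hasFDerivAt).const_mul c
  have hsin : HasDerivAt Real.sin (Real.cos (c * x i0)) (c * x i0) := Real.hasDerivAt_sin _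
  have hcomp := hsin.comp_hasFDerivAt x hP
  exact hρd.mul hcomp

private theorem phi_fderiv_apply {n : ℕ} (i0 : Fin n) (ρ : EuclideanSpace ℝ (Fin n) → ℝ)
    (hρ : ContDiff ℝ (⊤ : ℕ∞) ρ) (c : ℝ) (x v : EuclideanSpace ℝ (Fin n)) :
    fderiv ℝ (fun x : EuclideanSpace ℝ (Fin n) => ρ x * Real.sin (c * x i0)) x v
      = ρ x * (Real.cos (c * x i0) * (c * v i0)) + Real.sin (c * x i0) * (fderiv ℝ ρ x v) := by
  rw [(phi_hasFDerivAt i0 ρ hρ c x).fderiv]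
  simp [mul_comm]

set_option maxHeartbeats 2000000 in
/-- Flat-space analytic core of part 2 of the main theorem: in an ergoregion
(`α ≥ 1 + ε` on a ball), the energy of the high-frequency data
`φ_m(x) = ρ(x) sin(m x₁)` tends to `-∞` as `m → ∞`. -/
theorem ergoregion_energy_tendsto_atBot (n : ℕ) (hn : 2 ≤ n)
    (Ω : Set (EuclideanSpace ℝ (Fin n)))
    (hΩopen : IsOpen Ω) (hΩbdd : Bornology.IsBounded Ω)
    (p : EuclideanSpace ℝ (Fin n)) (R : ℝ) (hR : 0 < R)
    (hball : Metric.closedBall p R ⊆ Ω)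
    (ρ : EuclideanSpace ℝ (Fin n) → ℝ) (hρ : ContDiff ℝ (⊤ : ℕ∞) ρ)
    (hρcpt : HasCompactSupport ρ) (hρsupp : tsupport ρ ⊆ Ω)
    (hρ1 : ∀ x ∈ Metric.closedBall p R, ρ x = 1)
    (μ α G : EuclideanSpace ℝ (Fin n) → ℝ)
    (hμmeas : Measurable μ) (hαmeas : Measurable α) (hGmeas : Measurable G)
    (μ₀ μ₁ α₁ L ε : ℝ)
    (hμ₀ : 0 < μ₀) (hμ₁ : 0 < μ₁) (hα₁ : 0 < α₁) (hL : 0 < L) (hε : 0 < ε)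
    (hμbound : ∀ x ∈ Ω, μ₀ ≤ μ x ∧ μ x ≤ μ₁)
    (hαbound : ∀ x ∈ Ω, 1 ≤ α x ∧ α x ≤ α₁)
    (hGbound : ∀ x ∈ Ω, |G x| ≤ L)
    (hαball : ∀ x ∈ Metric.closedBall p R, 1 + ε ≤ α x)
    (h : ℝ → ℝ) (hh : Continuous h)
    (φ : ℕ → EuclideanSpace ℝ (Fin n) → ℝ)
    (hφ : ∀ m x, φ m x = ρ x * Real.sin (m * x ⟨0, by omega⟩))
    (E : ℕ → ℝ)
    (hE : ∀ m, E m = ∫ x in Ω, (1 / μ x) *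
      ((1 / 2) * G x * h (φ m x)
        + (1 - α x) * (fderiv ℝ (φ m) x (EuclideanSpace.single ⟨0, by omega⟩ 1)) ^ 2
        + ∑ j ∈ Finset.univ.erase (⟨0, by omega⟩ : Fin n),
            (fderiv ℝ (φ m) x (EuclideanSpace.single j 1)) ^ 2)) :
    Tendsto E atTop atBot := by
  have hn0 : 0 < n := by omega
  set i0 : Fin n := ⟨0, hn0⟩ with hi0
  -- global constants
  obtain ⟨Cρ, hCρ⟩ : ∃ C, ∀ x, |ρ x| ≤ C := by
    obtain ⟨C, hC⟩ := (hρ.continuous.abs).bounded_above_of_compact_support hρcpt.abs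
    exact ⟨C, fun x => by simpa using hC x⟩
  have hCρ0 : 0 ≤ Cρ := le_trans (abs_nonneg _) (hCρ p)
  obtain ⟨CD, hCD⟩ : ∃ C, ∀ x, ‖fderiv ℝ ρ x‖ ≤ C := by
    obtain ⟨C, hC⟩ := ((hρ.continuous_fderiv (by simp)).norm).bounded_above_of_compact_support
      ((hρcpt.fderiv (𝕜 := ℝ)).norm)
    exact ⟨C, fun x => by simpa using hC x⟩
  have hCD0 : 0 ≤ CD := le_trans (norm_nonneg _) (hCD p)
  obtain ⟨K, hK⟩ : ∃ K, ∀ t ∈ Set.Icc (-Cρ) Cρ, |h t| ≤ K := by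
    obtain ⟨K, hK⟩ := (isCompact_Icc (a := -Cρ) (b := Cρ)).exists_bound_of_continuousOn
      hh.continuousOn
    exact ⟨K, fun t ht => by simpa using hK t ht⟩
  have hK0 : 0 ≤ K := le_trans (abs_nonneg _) (hK 0 ⟨by linarith, hCρ0⟩)
  -- the box
  set r : ℝ := R / n with hrdef
  have hr : 0 < r := by positivity
  set Q : Set (EuclideanSpace ℝ (Fin n)) :=
    {x | ∀ i, x i ∈ Set.Icc (p i - r) (p i + r)} with hQdef
  have hQball : Q ⊆ Metric.ball p R := by
    intro x hx
    rw [Metric.mem_ball, EuclideanSpace.dist_eq]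
    have hsum : ∑ i, dist (x i) (p i) ^ 2 ≤ n * r ^ 2 := by
      have hterm : ∀ i : Fin n, dist (x i) (p i) ^ 2 ≤ r ^ 2 := by
        intro i
        have hxi := hx i
        have habs : |x i - p i| ≤ r :=
          abs_le.mpr ⟨by linarith [hxi.1], by linarith [hxi.2]⟩
        rw [Real.dist_eq]
        exact pow_le_pow_left₀ (abs_nonneg _) habs 2
      calc ∑ i, dist (x i) (p i) ^ 2 ≤ ∑ _i : Fin n, r ^ 2 :=
            Finset.sum_le_sum (fun i _ => hterm i)
        _ = n * r ^ 2 := by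
            simp [Finset.sum_const, Finset.card_univ]
    have h1 : Real.sqrt (∑ i, dist (x i) (p i) ^ 2) ≤ Real.sqrt (n * r ^ 2) :=
      Real.sqrt_le_sqrt hsum
    have h2 : Real.sqrt (n * r ^ 2) < R := by
      have heq : (n : ℝ) * r ^ 2 = (Real.sqrt n * r) ^ 2 := by
        rw [mul_pow, Real.sq_sqrt (by positivity)]
      rw [heq, Real.sqrt_sq (by positivity)]
      have h1n : (1 : ℝ) < (n : ℝ) := by
        have : (2:ℝ) ≤ (n:ℝ) := by exact_mod_cast hn
        linarith
      have hsn : Real.sqrt n < n := by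
        have hlt : Real.sqrt n < Real.sqrt ((n : ℝ) ^ 2) :=
          Real.sqrt_lt_sqrt (by positivity) (by nlinarith)
        rwa [Real.sqrt_sq (by positivity)] at hlt
      calc Real.sqrt n * r = Real.sqrt n * (R / n) := by rw [hrdef]
        _ < n * (R / n) := mul_lt_mul_of_pos_right hsn (by positivity)
        _ = R := by field_simp
    exact lt_of_le_of_lt h1 h2
  have hQΩ : Q ⊆ Ω := fun x hx => hball (Metric.ball_subset_closedBall (hQball hx))
  have hQmeas : MeasurableSet Q := by
    have hcoord : ∀ i : Fin n, Measurable (fun x : EuclideanSpace ℝ (Fin n) => x i) :=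
      fun i => (EuclideanSpace.proj i : EuclideanSpace ℝ (Fin n) →L[ℝ] ℝ).continuous.measurable
    have hrw : Q = ⋂ i, (fun x : EuclideanSpace ℝ (Fin n) => x i) ⁻¹'
        Set.Icc (p i - r) (p i + r) := by
      ext x
      simp [hQdef, Set.mem_iInter]
    rw [hrw]
    exact MeasurableSet.iInter fun i => (hcoord i) measurableSet_Icc
  have hΩmeas := hΩopen.measurableSet
  have hΩfin : volume Ω < ⊤ := hΩbdd.measure_lt_top
  set V : ℝ := (volume Ω).toReal with hV
  set C₀ : ℝ := (L * K / 2 + n * CD ^ 2) / μ₀ with hC₀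
  -- the key estimate
  have key : ∀ m : ℕ, 1 ≤ m →
      E m ≤ C₀ * V - (ε / μ₁) * (2 * r) ^ (n - 1) * ((m : ℝ) ^ 2 * (r - 1 / m)) := by
    intro m hm
    have hφm : φ m = fun x => ρ x * Real.sin ((m : ℝ) * x i0) := funext (hφ m)
    have hder : ∀ x v, fderiv ℝ (φ m) x v
        = ρ x * (Real.cos (m * x i0) * (m * v i0))
          + Real.sin (m * x i0) * (fderiv ℝ ρ x v) := by
      intro x v
      rw [hφm]
      exact phi_fderiv_apply i0 ρ hρ m x v
    have hx0cont : Continuous fun x : EuclideanSpace ℝ (Fin n) => (m : ℝ) * x i0 :=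
      continuous_const.mul (EuclideanSpace.proj i0 :
        EuclideanSpace ℝ (Fin n) →L[ℝ] ℝ).continuous
    have hφcont : Continuous (φ m) := by
      rw [hφm]
      exact hρ.continuous.mul (Real.continuous_sin.comp hx0cont)
    have hdercont : ∀ v : EuclideanSpace ℝ (Fin n),
        Continuous fun x => fderiv ℝ (φ m) x v := by
      intro v
      have hfd : Continuous fun x : EuclideanSpace ℝ (Fin n) => fderiv ℝ ρ x v :=
        (ContinuousLinearMap.apply ℝ ℝ v).continuous.comp (hρ.continuous_fderiv (by simp))
      have hc : Continuous fun x : EuclideanSpace ℝ (Fin n) =>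
          ρ x * (Real.cos (m * x i0) * (m * v i0))
            + Real.sin (m * x i0) * (fderiv ℝ ρ x v) :=
        (hρ.continuous.mul ((Real.continuous_cos.comp hx0cont).mul continuous_const)).add
          ((Real.continuous_sin.comp hx0cont).mul hfd)
      exact hc.congr (fun x => (hder x v).symm)
    have hsingle : ∀ (j i : Fin n), |(EuclideanSpace.single j (1:ℝ)) i| ≤ 1 := by
      intro j i
      rw [EuclideanSpace.single_apply]
      split <;> simp
    have hfd1 : ∀ x (j : Fin n), |fderiv ℝ ρ x (EuclideanSpace.single j 1)| ≤ CD := by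
      intro x j
      have hop := (fderiv ℝ ρ x).le_opNorm (EuclideanSpace.single j (1:ℝ))
      rw [EuclideanSpace.norm_single, norm_one, mul_one] at hop
      calc |fderiv ℝ ρ x (EuclideanSpace.single j 1)|
          = ‖fderiv ℝ ρ x (EuclideanSpace.single j 1)‖ := (Real.norm_eq_abs _).symm
        _ ≤ ‖fderiv ℝ ρ x‖ := hop
        _ ≤ CD := hCD x
    have hdbound : ∀ x (j : Fin n),
        |fderiv ℝ (φ m) x (EuclideanSpace.single j 1)| ≤ Cρ * m + CD := by
      intro x j
      rw [hder]
      have h2 : |ρ x * (Real.cos (m * x i0) * (m * (EuclideanSpace.single j (1:ℝ)) i0))|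
          ≤ Cρ * m := by
        rw [abs_mul, abs_mul, abs_mul, Nat.abs_cast]
        calc |ρ x| * (|Real.cos (m * x i0)| * ((m:ℝ) * |(EuclideanSpace.single j (1:ℝ)) i0|))
            ≤ Cρ * (1 * ((m:ℝ) * 1)) := by
              gcongr
              · exact hCρ x
              · exact Real.abs_cos_le_one _
              · exact hsingle j i0
          _ = Cρ * m := by ring
      have h3 : |Real.sin (m * x i0) * fderiv ℝ ρ x (EuclideanSpace.single j 1)| ≤ CD := by
        rw [abs_mul]
        calc |Real.sin (m * x i0)| * |fderiv ℝ ρ x (EuclideanSpace.single j 1)|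
            ≤ 1 * CD := mul_le_mul (Real.abs_sin_le_one _) (hfd1 x j) (abs_nonneg _) zero_le_one
          _ = CD := one_mul _
      calc |ρ x * (Real.cos (m * x i0) * (m * (EuclideanSpace.single j (1:ℝ)) i0))
            + Real.sin (m * x i0) * fderiv ℝ ρ x (EuclideanSpace.single j 1)|
          ≤ |ρ x * (Real.cos (m * x i0) * (m * (EuclideanSpace.single j (1:ℝ)) i0))|
            + |Real.sin (m * x i0) * fderiv ℝ ρ x (EuclideanSpace.single j 1)| := abs_add_le _ _
        _ ≤ Cρ * m + CD := add_le_add h2 h3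
    have hdj : ∀ x (j : Fin n), j ≠ i0 →
        |fderiv ℝ (φ m) x (EuclideanSpace.single j 1)| ≤ CD := by
      intro x j hj
      rw [hder]
      have hz : (EuclideanSpace.single j (1:ℝ)) i0 = 0 := by
        rw [EuclideanSpace.single_apply, if_neg (fun hc => hj hc.symm)]
      rw [hz, mul_zero, mul_zero, mul_zero, zero_add, abs_mul]
      calc |Real.sin (m * x i0)| * |fderiv ℝ ρ x (EuclideanSpace.single j 1)|
          ≤ 1 * CD := mul_le_mul (Real.abs_sin_le_one _) (hfd1 x j) (abs_nonneg _) zero_le_one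
        _ = CD := one_mul _
    have hφval : ∀ x, φ m x ∈ Set.Icc (-Cρ) Cρ := by
      intro x
      have habs : |φ m x| ≤ Cρ := by
        rw [hφ m x, abs_mul]
        calc |ρ x| * |Real.sin ((m:ℝ) * x i0)| ≤ Cρ * 1 :=
              mul_le_mul (hCρ x) (Real.abs_sin_le_one _) (abs_nonneg _) hCρ0
          _ = Cρ := mul_one _
      exact ⟨by linarith [abs_le.mp habs |>.1], abs_le.mp habs |>.2⟩
    have hAbs : ∀ x ∈ Ω, |1 / 2 * G x * h (φ m x)| ≤ L * K / 2 := by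
      intro x hx
      rw [abs_mul, abs_mul]
      have hh1 : |h (φ m x)| ≤ K := hK _ (hφval x)
      have h12 : |(1/2 : ℝ)| = 1/2 := by norm_num
      rw [h12]
      calc 1/2 * |G x| * |h (φ m x)| ≤ 1/2 * L * K := by
            gcongr
            · exact hGbound x hx
        _ = L * K / 2 := by ring
    have hSb : ∀ x, (∑ j ∈ Finset.univ.erase i0,
        (fderiv ℝ (φ m) x (EuclideanSpace.single j 1)) ^ 2) ≤ n * CD ^ 2 := by
      intro x
      have hcard : (((Finset.univ : Finset (Fin n)).erase i0).card : ℝ) ≤ n := by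
        have hle := Finset.card_erase_le (s := (Finset.univ : Finset (Fin n))) (a := i0)
        have : (Finset.univ : Finset (Fin n)).card = n := by
          rw [Finset.card_univ, Fintype.card_fin]
        exact_mod_cast this ▸ hle
      calc ∑ j ∈ Finset.univ.erase i0, (fderiv ℝ (φ m) x (EuclideanSpace.single j 1)) ^ 2
          ≤ ∑ _j ∈ Finset.univ.erase i0, CD ^ 2 := by
            apply Finset.sum_le_sum
            intro j hj
            have hj' : j ≠ i0 := (Finset.mem_erase.mp hj).1
            calc (fderiv ℝ (φ m) x (EuclideanSpace.single j 1)) ^ 2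
                = |fderiv ℝ (φ m) x (EuclideanSpace.single j 1)| ^ 2 := (sq_abs _).symm
              _ ≤ CD ^ 2 := pow_le_pow_left₀ (abs_nonneg _) (hdj x j hj') 2
        _ = (((Finset.univ : Finset (Fin n)).erase i0).card : ℝ) * CD ^ 2 := by
            rw [Finset.sum_const, nsmul_eq_mul]
        _ ≤ n * CD ^ 2 := mul_le_mul_of_nonneg_right hcard (sq_nonneg _)
    have hSnonneg : ∀ x, (0:ℝ) ≤ ∑ j ∈ Finset.univ.erase i0,
        (fderiv ℝ (φ m) x (EuclideanSpace.single j 1)) ^ 2 :=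
      fun x => Finset.sum_nonneg (fun j _ => sq_nonneg _)
    -- the integrand and the comparison function
    have hEm := hE m
    set ψ : EuclideanSpace ℝ (Fin n) → ℝ := fun x => (1 / μ x) *
      ((1 / 2) * G x * h (φ m x)
        + (1 - α x) * (fderiv ℝ (φ m) x (EuclideanSpace.single i0 1)) ^ 2
        + ∑ j ∈ Finset.univ.erase i0,
            (fderiv ℝ (φ m) x (EuclideanSpace.single j 1)) ^ 2) with hψdef
    set g : EuclideanSpace ℝ (Fin n) → ℝ := fun x =>
      C₀ - ((ε / μ₁) * m ^ 2) * Set.indicator Q (fun y => Real.cos (m * y i0) ^ 2) x with hgdef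
    have hmeasψ : Measurable ψ := by
      apply Measurable.mul
      · exact measurable_const.div hμmeas
      · apply Measurable.add
        · apply Measurable.add
          · exact (measurable_const.mul hGmeas).mul ((hh.comp hφcont).measurable)
          · exact (measurable_const.sub hαmeas).mul
              (((hdercont _).measurable).pow_const 2)
        · exact Finset.measurable_sum _ (fun j _ => ((hdercont _).measurable).pow_const 2)
    have hψb : ∀ x ∈ Ω, |ψ x| ≤ (1/μ₀) * (L*K/2 + α₁*(Cρ*m+CD)^2 + n*CD^2) := by
      intro x hx
      have hμx := hμbound x hx
      have hαx := hαbound x hx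
      have hμpos : 0 < μ x := lt_of_lt_of_le hμ₀ hμx.1
      have h1 : |(1:ℝ) / μ x| ≤ 1 / μ₀ := by
        rw [abs_of_pos (by positivity)]
        exact one_div_le_one_div_of_le hμ₀ hμx.1
      have hA := hAbs x hx
      have hBabs : |(1 - α x) * (fderiv ℝ (φ m) x (EuclideanSpace.single i0 1)) ^ 2|
          ≤ α₁ * (Cρ * m + CD) ^ 2 := by
        rw [abs_mul]
        apply mul_le_mul
        · rw [abs_le]
          constructor <;> [linarith [hαx.2, hα₁.le]; linarith [hαx.1, hα₁.le]]
        · rw [abs_of_nonneg (sq_nonneg _)]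
          calc (fderiv ℝ (φ m) x (EuclideanSpace.single i0 1)) ^ 2
              = |fderiv ℝ (φ m) x (EuclideanSpace.single i0 1)| ^ 2 := (sq_abs _).symm
            _ ≤ (Cρ * m + CD) ^ 2 := pow_le_pow_left₀ (abs_nonneg _) (hdbound x i0) 2
        · exact abs_nonneg _
        · exact hα₁.le
      have hSabs : |∑ j ∈ Finset.univ.erase i0,
          (fderiv ℝ (φ m) x (EuclideanSpace.single j 1)) ^ 2| ≤ n * CD ^ 2 := by
        rw [abs_of_nonneg (hSnonneg x)]
        exact hSb x
      have habs : |ψ x| = |(1:ℝ)/μ x| * |(1 / 2) * G x * h (φ m x)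
          + (1 - α x) * (fderiv ℝ (φ m) x (EuclideanSpace.single i0 1)) ^ 2
          + ∑ j ∈ Finset.univ.erase i0,
              (fderiv ℝ (φ m) x (EuclideanSpace.single j 1)) ^ 2| := by
        rw [hψdef, abs_mul]
      rw [habs]
      apply mul_le_mul h1 ?_ (abs_nonneg _) (by positivity)
      calc |(1 / 2) * G x * h (φ m x)
          + (1 - α x) * (fderiv ℝ (φ m) x (EuclideanSpace.single i0 1)) ^ 2
          + ∑ j ∈ Finset.univ.erase i0,
              (fderiv ℝ (φ m) x (EuclideanSpace.single j 1)) ^ 2|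
          ≤ |(1 / 2) * G x * h (φ m x)
          + (1 - α x) * (fderiv ℝ (φ m) x (EuclideanSpace.single i0 1)) ^ 2|
            + |∑ j ∈ Finset.univ.erase i0,
              (fderiv ℝ (φ m) x (EuclideanSpace.single j 1)) ^ 2| := abs_add_le _ _
        _ ≤ |(1 / 2) * G x * h (φ m x)|
            + |(1 - α x) * (fderiv ℝ (φ m) x (EuclideanSpace.single i0 1)) ^ 2|
            + |∑ j ∈ Finset.univ.erase i0,
              (fderiv ℝ (φ m) x (EuclideanSpace.single j 1)) ^ 2| := by
            linarith [abs_add_le ((1 / 2) * G x * h (φ m x))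
              ((1 - α x) * (fderiv ℝ (φ m) x (EuclideanSpace.single i0 1)) ^ 2)]
        _ ≤ L*K/2 + α₁*(Cρ*m+CD)^2 + n*CD^2 := by linarith
    have hint : IntegrableOn ψ Ω := by
      apply Integrable.mono'
        (g := fun _ => (1/μ₀) * (L*K/2 + α₁*(Cρ*m+CD)^2 + n*CD^2))
        (integrableOn_const hΩfin.ne) hmeasψ.aestronglyMeasurable
      rw [ae_restrict_iff' hΩmeas]
      exact ae_of_all _ (fun x hx => by rw [Real.norm_eq_abs]; exact hψb x hx)
    have hindmeas : Measurable fun x : EuclideanSpace ℝ (Fin n) =>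
        Set.indicator Q (fun y => Real.cos (m * y i0) ^ 2) x := by
      apply Measurable.indicator _ hQmeas
      exact ((Real.continuous_cos.comp hx0cont).pow 2).measurable
    have hindint : IntegrableOn
        (fun x => Set.indicator Q (fun y => Real.cos (m * y i0) ^ 2) x) Ω := by
      apply Integrable.mono' (g := fun _ => (1:ℝ))
        (integrableOn_const hΩfin.ne) hindmeas.aestronglyMeasurable
      apply ae_of_all
      intro x
      rw [Real.norm_eq_abs]
      by_cases hxQ : x ∈ Q
      · rw [Set.indicator_of_mem hxQ, abs_of_nonneg (sq_nonneg _), ← sq_abs]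
        exact pow_le_one₀ (abs_nonneg _) (Real.abs_cos_le_one _)
      · rw [Set.indicator_of_notMem hxQ]
        simp
    have hgint : IntegrableOn g Ω := by
      rw [hgdef]
      exact (integrableOn_const hΩfin.ne).sub (hindint.const_mul _)
    -- pointwise comparison
    have hle : ∀ x ∈ Ω, ψ x ≤ g x := by
      intro x hx
      have hμx := hμbound x hx
      have hαx := hαbound x hx
      have hμpos : 0 < μ x := lt_of_lt_of_le hμ₀ hμx.1
      have hinvpos : (0:ℝ) ≤ 1 / μ x := by positivity
      have hinv0 : 1 / μ x ≤ 1 / μ₀ := one_div_le_one_div_of_le hμ₀ hμx.1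
      have hψx : ψ x = (1 / μ x) * ((1 / 2) * G x * h (φ m x))
          + (1 / μ x) * ((1 - α x) * (fderiv ℝ (φ m) x (EuclideanSpace.single i0 1)) ^ 2)
          + (1 / μ x) * (∑ j ∈ Finset.univ.erase i0,
              (fderiv ℝ (φ m) x (EuclideanSpace.single j 1)) ^ 2) := by
        rw [hψdef]; ring
      have hterm1 : (1 / μ x) * ((1 / 2) * G x * h (φ m x)) ≤ (1/μ₀) * (L*K/2) := by
        calc (1 / μ x) * ((1 / 2) * G x * h (φ m x))
            ≤ (1 / μ x) * |(1 / 2) * G x * h (φ m x)| :=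
              mul_le_mul_of_nonneg_left (le_abs_self _) hinvpos
          _ ≤ (1/μ₀) * (L*K/2) :=
              mul_le_mul hinv0 (hAbs x hx) (abs_nonneg _) (by positivity)
      have hterm3 : (1 / μ x) * (∑ j ∈ Finset.univ.erase i0,
          (fderiv ℝ (φ m) x (EuclideanSpace.single j 1)) ^ 2) ≤ (1/μ₀) * (n * CD^2) :=
        mul_le_mul hinv0 (hSb x) (hSnonneg x) (by positivity)
      have h1α : 1 - α x ≤ 0 := by linarith [hαx.1]
      have hCsplit : (1/μ₀) * (L*K/2) + (1/μ₀) * (n * CD^2) = C₀ := by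
        rw [hC₀]; ring
      by_cases hxQ : x ∈ Q
      · have hxball := hQball hxQ
        have hρx : ρ x = 1 := hρ1 x (Metric.ball_subset_closedBall hxball)
        have hfρ : fderiv ℝ ρ x = 0 := by
          have hev : ρ =ᶠ[nhds x] fun _ => (1:ℝ) :=
            Filter.eventuallyEq_of_mem (Metric.isOpen_ball.mem_nhds hxball)
              (fun y hy => hρ1 y (Metric.ball_subset_closedBall hy))
          rw [hev.fderiv_eq]
          exact fderiv_const_apply 1
        have hval : fderiv ℝ (φ m) x (EuclideanSpace.single i0 1)
            = m * Real.cos (m * x i0) := by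
          rw [hder, hρx, hfρ]
          simp [EuclideanSpace.single_apply]
          ring
        have hεα : 1 - α x ≤ -ε := by
          have := hαball x (Metric.ball_subset_closedBall hxball)
          linarith
        have hBneg : (1 - α x) * ((m:ℝ) * Real.cos (m * x i0)) ^ 2 ≤ 0 :=
          mul_nonpos_of_nonpos_of_nonneg h1α (sq_nonneg _)
        have hj : (1:ℝ)/μ₁ ≤ 1/μ x := one_div_le_one_div_of_le hμpos hμx.2
        have hterm2 : (1 / μ x) * ((1 - α x) *
            (fderiv ℝ (φ m) x (EuclideanSpace.single i0 1)) ^ 2)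
            ≤ -((ε / μ₁) * m ^ 2 * Real.cos (m * x i0) ^ 2) := by
          rw [hval]
          calc (1 / μ x) * ((1 - α x) * ((m:ℝ) * Real.cos (m * x i0)) ^ 2)
              ≤ (1 / μ₁) * ((1 - α x) * ((m:ℝ) * Real.cos (m * x i0)) ^ 2) :=
                mul_le_mul_of_nonpos_right hj hBneg
            _ ≤ (1 / μ₁) * (-ε * ((m:ℝ) * Real.cos (m * x i0)) ^ 2) :=
                mul_le_mul_of_nonneg_left
                  (mul_le_mul_of_nonneg_right hεα (sq_nonneg _)) (by positivity)
            _ = -((ε / μ₁) * m ^ 2 * Real.cos (m * x i0) ^ 2) := by ring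
        have hgx : g x = C₀ - (ε / μ₁) * m ^ 2 * Real.cos (m * x i0) ^ 2 := by
          rw [hgdef]
          simp only [Set.indicator_of_mem hxQ]
        rw [hψx, hgx]
        linarith
      · have hd0sq : (0:ℝ) ≤ (fderiv ℝ (φ m) x (EuclideanSpace.single i0 1)) ^ 2 :=
          sq_nonneg _
        have hterm2 : (1 / μ x) * ((1 - α x) *
            (fderiv ℝ (φ m) x (EuclideanSpace.single i0 1)) ^ 2) ≤ 0 :=
          mul_nonpos_of_nonneg_of_nonpos hinvpos
            (mul_nonpos_of_nonpos_of_nonneg h1α hd0sq)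
        have hgx : g x = C₀ := by
          rw [hgdef]
          simp only [Set.indicator_of_notMem hxQ, mul_zero, sub_zero]
        rw [hψx, hgx]
        linarith
    have h1 : E m ≤ ∫ x in Ω, g x := by
      rw [hEm]
      exact setIntegral_mono_on hint hgint hΩmeas hle
    have h2 : ∫ x in Ω, g x = C₀ * V - ((ε / μ₁) * m ^ 2) *
        ((2*r)^(n-1) * ∫ t in Set.Icc (p i0 - r) (p i0 + r), Real.cos (m * t) ^ 2) := by
      have hsplit : ∫ x in Ω, g x = (∫ _x in Ω, C₀) -
          ∫ x in Ω, ((ε / μ₁) * m ^ 2) *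
            Set.indicator Q (fun y => Real.cos (m * y i0) ^ 2) x := by
        rw [hgdef]
        exact integral_sub (integrableOn_const hΩfin.ne) (hindint.const_mul _)
      rw [hsplit, setIntegral_const, integral_const_mul,
        setIntegral_indicator hQmeas, Set.inter_eq_self_of_subset_right hQΩ,
        smul_eq_mul, mul_comm (volume.real Ω) C₀, measureReal_def, hQdef,
        box_cos n i0 p r hr m]
    have hIcc := cos_sq_icc (p i0) r hr m hm
    have hmono : ((ε / μ₁) * m ^ 2) * ((2*r)^(n-1) * (r - 1/m))
        ≤ ((ε / μ₁) * m ^ 2) *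
          ((2*r)^(n-1) * ∫ t in Set.Icc (p i0 - r) (p i0 + r), Real.cos (m * t) ^ 2) := by
      apply mul_le_mul_of_nonneg_left _ (by positivity)
      exact mul_le_mul_of_nonneg_left hIcc (by positivity)
    have hring : ((ε / μ₁) * m ^ 2) * ((2*r)^(n-1) * (r - 1/m))
        = (ε / μ₁) * (2 * r) ^ (n - 1) * ((m : ℝ) ^ 2 * (r - 1 / m)) := by ring
    linarith [h1, h2.le, hmono, hring.le]
  -- conclusion
  set c : ℝ := (ε / μ₁) * (2 * r) ^ (n - 1) with hc
  have hcpos : 0 < c := by positivity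
  have hu : Tendsto (fun m : ℕ => C₀ * V - c * ((m : ℝ) ^ 2 * (r - 1 / m))) atTop atBot := by
    have h1 : Tendsto (fun m : ℕ => (m : ℝ) ^ 2 * (r - 1 / m)) atTop atTop := by
      apply tendsto_atTop_mono' atTop ?_ tendsto_natCast_atTop_atTop
      filter_upwards [eventually_ge_atTop (max 1 ⌈2 / r⌉₊)] with m hm
      have hm1 : 1 ≤ m := le_trans (le_max_left _ _) hm
      have hmr : (1:ℝ) ≤ (m:ℝ) := by exact_mod_cast hm1
      have hm2 : (2 / r : ℝ) ≤ m := by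
        calc (2 / r : ℝ) ≤ ⌈2 / r⌉₊ := Nat.le_ceil _
          _ ≤ m := by exact_mod_cast le_trans (le_max_right _ _) hm
      have hmne : (m:ℝ) ≠ 0 := by linarith
      have hcast : (m : ℝ) ^ 2 * (r - 1 / m) = r * m^2 - m := by
        field_simp
      rw [hcast]
      have hrm : 2 ≤ r * m := by
        rw [div_le_iff₀ hr] at hm2
        linarith
      nlinarith
    have h2 := h1.const_mul_atTop hcpos
    have h3 : Tendsto (fun m : ℕ => -(c * ((m : ℝ) ^ 2 * (r - 1 / m)))) atTop atBot :=
      tendsto_neg_atTop_atBot.comp h2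
    simp only [sub_eq_add_neg]
    exact tendsto_atBot_add_const_left atTop (C₀ * V) h3
  apply tendsto_atBot_mono' atTop ?_ hu
  filter_upwards [eventually_ge_atTop 1] with m hm using key m hm
end
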